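/- arXiv:2003.11298 — 3 statements merged into one kernel-verified Lean document; each statement's English description precedes it below -/
import Mathlib

section
/- Every signed fibration π: (Γ, α̃_Γ) → (B, α̃_B) of signed GKM graphs gives rise to a fiberwise signed fibration of the underlying unsigned GKM graphs (with fiber lift the restriction of α̃_Γ to the vertical edges). Conversely, if (π, α̃) is a fiberwise signed fibration of GKM graphs π: (Γ,α) → (B,α_B), then every signed structure α̃_B compatible with the base GKM graph (B,α_B) gives rise to a unique signed structure α̃_Γ on Γ which extends α̃ on the vertical edges and makes π: (Γ,α̃_Γ) → (B,α̃_B) a signed fibration. -/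
open Classical

namespace GKMPaper

/-- `ℤ^m`, the weight lattice. -/
abbrev Zm (m : ℕ) := Fin m → ℤ

/-- The relation identifying a vector with its negative. -/
def pmRel (m : ℕ) (a b : Zm m) : Prop := a = b ∨ a = -b

theorem pmRel_equiv (m : ℕ) : Equivalence (pmRel m) := by
  constructor
  · intro a; exact Or.inl rfl
  · intro a b hab
    rcases hab with hh | hh
    · exact Or.inl hh.symm
    · exact Or.inr (by rw [hh, neg_neg])
  · intro a b c h1 h2
    rcases h1 with h1 | h1 <;> rcases h2 with h2 | h2
    · exact Or.inl (h1.trans h2)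
    · exact Or.inr (h1.trans h2)
    · exact Or.inr (by rw [h1, h2])
    · exact Or.inl (by rw [h1, h2, neg_neg])

def pmSetoid (m : ℕ) : Setoid (Zm m) := ⟨pmRel m, pmRel_equiv m⟩

/-- `ℤ^m / ±1`. -/
def ZmPM (m : ℕ) := Quotient (pmSetoid m)

/-- The projection `ℤ^m → ℤ^m/±1`. -/
def pm {m : ℕ} (a : Zm m) : ZmPM m := Quotient.mk (pmSetoid m) a

/-- Linear independence over `ℤ`. -/
def Indep {m : ℕ} (a b : Zm m) : Prop :=
  ∀ c d : ℤ, c • a + d • b = 0 → c = 0 ∧ d = 0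

/-- An abstract graph with finite vertex and edge sets, each edge occurring with
both orientations, and no loops. -/
structure OrGraph : Type 1 where
  V : Type
  E : Type
  fV : Fintype V
  fE : Fintype E
  dV : DecidableEq V
  dE : DecidableEq E
  src : E → V
  dst : E → V
  rev : E → E
  rev_rev : ∀ e, rev (rev e) = e
  rev_ne : ∀ e, rev e ≠ e
  src_rev : ∀ e, src (rev e) = dst e
  no_loop : ∀ e, src e ≠ dst e

attribute [instance] OrGraph.fV OrGraph.fE OrGraph.dV OrGraph.dE

/-- A connection on a graph. -/
structure Connection (G : OrGraph) where
  t : G.E → G.E → G.E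
  src_t : ∀ e f, G.src f = G.src e → G.src (t e f) = G.dst e
  t_self : ∀ e, t e e = G.rev e
  t_inv : ∀ e f, G.src f = G.src e → t (G.rev e) (t e f) = f

/-- `k`-valence. -/
def OrGraph.Regular (G : OrGraph) (k : ℕ) : Prop :=
  ∀ v : G.V, Fintype.card {e : G.E // G.src e = v} = k

def OrGraph.Adj (G : OrGraph) (v w : G.V) : Prop :=
  ∃ e, G.src e = v ∧ G.dst e = w

def OrGraph.IsConn (G : OrGraph) : Prop :=
  ∀ v w : G.V, Relation.ReflTransGen G.Adj v w

/-- Compatibility of a connection with an unsigned axial function. -/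
def UnsignedCompat {m : ℕ} (G : OrGraph) (α : G.E → ZmPM m) (C : Connection G) : Prop :=
  (∀ e f : G.E, G.src f = G.src e → e ≠ f →
      ∀ a b : Zm m, pm a = α e → pm b = α f → Indep a b) ∧
  (∀ e f : G.E, G.src f = G.src e →
      ∃ (a g : Zm m) (c : ℤ), pm a = α f ∧ pm g = α e ∧ α (C.t e f) = pm (a + c • g)) ∧
  (∀ e : G.E, α (G.rev e) = α e)

/-- `(G, α)` is an (unsigned) abstract GKM graph of valence `k` with labels in `ℤ^m/±1`. -/
def IsGKM {m : ℕ} (G : OrGraph) (k : ℕ) (α : G.E → ZmPM m) : Prop :=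
  G.Regular k ∧ G.IsConn ∧ ∃ C : Connection G, UnsignedCompat G α C

/-- Compatibility of a connection with a signed axial function. -/
def SignedCompat {m : ℕ} (G : OrGraph) (α : G.E → Zm m) (C : Connection G) : Prop :=
  (∀ e f : G.E, G.src f = G.src e → e ≠ f → Indep (α e) (α f)) ∧
  (∀ e f : G.E, G.src f = G.src e → ∃ c : ℤ, α (C.t e f) = α f + c • α e) ∧
  (∀ e : G.E, α (G.rev e) = - α e)

/-- `(G, α)` is a signed abstract GKM graph of valence `k` with labels in `ℤ^m`. -/
def IsSignedGKM {m : ℕ} (G : OrGraph) (k : ℕ) (α : G.E → Zm m) : Prop :=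
  G.Regular k ∧ G.IsConn ∧ ∃ C : Connection G, SignedCompat G α C

/-- Effectivity of an unsigned GKM graph: at every vertex, the labels of the
outgoing edges lift to a generating set of `ℤ^m`. -/
def Effective {m : ℕ} (G : OrGraph) (α : G.E → ZmPM m) : Prop :=
  ∀ v : G.V, ∃ lift : {e : G.E // G.src e = v} → Zm m,
    (∀ e, pm (lift e) = α e.1) ∧ Submodule.span ℤ (Set.range lift) = ⊤

def SignedEffective {m : ℕ} (G : OrGraph) (α : G.E → Zm m) : Prop :=
  ∀ v : G.V,
    Submodule.span ℤ (Set.range (fun e : {e : G.E // G.src e = v} => α e.1)) = ⊤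

/-- A graph fibration: a morphism sending vertices to vertices and horizontal
edges to edges, bijectively from the horizontal edges at `p` to the edges at `π(p)`. -/
structure GraphFib (G B : OrGraph) where
  onV : G.V → B.V
  onE : G.E → B.E
  src_onE : ∀ e, onV (G.src e) ≠ onV (G.dst e) → B.src (onE e) = onV (G.src e)
  dst_onE : ∀ e, onV (G.src e) ≠ onV (G.dst e) → B.dst (onE e) = onV (G.dst e)
  rev_onE : ∀ e, onV (G.src e) ≠ onV (G.dst e) → onE (G.rev e) = B.rev (onE e)

def GraphFib.Vertical {G B : OrGraph} (π : GraphFib G B) (e : G.E) : Prop :=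
  π.onV (G.src e) = π.onV (G.dst e)

def GraphFib.IsFib {G B : OrGraph} (π : GraphFib G B) : Prop :=
  ∀ p : G.V, Function.Bijective
    (fun e : {e : G.E // G.src e = p ∧ ¬ π.Vertical e} =>
      (⟨π.onE e.1, by rw [π.src_onE e.1 e.2.2, e.2.1]⟩ : {f : B.E // B.src f = π.onV p}))

/-- The extra conditions for a (unsigned) GKM fibration, w.r.t. connections `C`, `CB`. -/
def GKMFibCompat {m : ℕ} {G B : OrGraph} (αΓ : G.E → ZmPM m) (αB : B.E → ZmPM m)
    (π : GraphFib G B) (C : Connection G) (CB : Connection B) : Prop :=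
  (∀ e, ¬ π.Vertical e → αΓ e = αB (π.onE e)) ∧
  (∀ e f, G.src f = G.src e → π.Vertical f → π.Vertical (C.t e f)) ∧
  (∀ e f, G.src f = G.src e → ¬ π.Vertical e → ¬ π.Vertical f →
      ¬ π.Vertical (C.t e f) ∧ π.onE (C.t e f) = CB.t (π.onE e) (π.onE f))

/-- `π` is a GKM fibration of unsigned GKM graphs. -/
def IsGKMFib {m : ℕ} {G B : OrGraph} (αΓ : G.E → ZmPM m) (αB : B.E → ZmPM m)
    (π : GraphFib G B) : Prop :=
  π.IsFib ∧ ∃ (C : Connection G) (CB : Connection B),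
    UnsignedCompat G αΓ C ∧ UnsignedCompat B αB CB ∧ GKMFibCompat αΓ αB π C CB

def SignedGKMFibCompat {m : ℕ} {G B : OrGraph} (sΓ : G.E → Zm m) (sB : B.E → Zm m)
    (π : GraphFib G B) (C : Connection G) (CB : Connection B) : Prop :=
  (∀ e, ¬ π.Vertical e → sΓ e = sB (π.onE e)) ∧
  (∀ e f, G.src f = G.src e → π.Vertical f → π.Vertical (C.t e f)) ∧
  (∀ e f, G.src f = G.src e → ¬ π.Vertical e → ¬ π.Vertical f →
      ¬ π.Vertical (C.t e f) ∧ π.onE (C.t e f) = CB.t (π.onE e) (π.onE f))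

/-- `π` is a signed GKM fibration of signed GKM graphs. -/
def IsSignedGKMFib {m : ℕ} {G B : OrGraph} (sΓ : G.E → Zm m) (sB : B.E → Zm m)
    (π : GraphFib G B) : Prop :=
  π.IsFib ∧ ∃ (C : Connection G) (CB : Connection B),
    SignedCompat G sΓ C ∧ SignedCompat B sB CB ∧ SignedGKMFibCompat sΓ sB π C CB

/-- `(π, ft)` is a fiberwise signed fibration: `ft` is a lift of `αΓ` on the
vertical edges, satisfying the congruence condition w.r.t. suitable connections. -/
def IsFiberwiseSigned {m : ℕ} {G B : OrGraph} (αΓ : G.E → ZmPM m) (αB : B.E → ZmPM m)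
    (π : GraphFib G B) (ft : G.E → Zm m) : Prop :=
  π.IsFib ∧
  (∀ e, π.Vertical e → pm (ft e) = αΓ e) ∧
  (∀ e, π.Vertical e → ft (G.rev e) = - ft e) ∧
  ∃ (C : Connection G) (CB : Connection B),
    UnsignedCompat G αΓ C ∧ UnsignedCompat B αB CB ∧ GKMFibCompat αΓ αB π C CB ∧
    ∀ e f, G.src f = G.src e → π.Vertical f →
      ∃ (g : Zm m) (c : ℤ), pm g = αΓ e ∧ ft (C.t e f) = ft f + c • g

/-- Isomorphism of unsigned GKM graphs. -/
structure GKMIso {m : ℕ} (G : OrGraph) (α : G.E → ZmPM m)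
    (G' : OrGraph) (α' : G'.E → ZmPM m) : Type where
  fV : G.V ≃ G'.V
  fE : G.E ≃ G'.E
  φ : Zm m ≃ₗ[ℤ] Zm m
  src_comm : ∀ e, G'.src (fE e) = fV (G.src e)
  dst_comm : ∀ e, G'.dst (fE e) = fV (G.dst e)
  rev_comm : ∀ e, fE (G.rev e) = G'.rev (fE e)
  lab : ∀ (e : G.E) (a : Zm m), pm a = α e → α' (fE e) = pm (φ a)

/-- Isomorphism of signed GKM graphs. -/
structure SignedGKMIso {m : ℕ} (G : OrGraph) (α : G.E → Zm m)
    (G' : OrGraph) (α' : G'.E → Zm m) : Type where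
  fV : G.V ≃ G'.V
  fE : G.E ≃ G'.E
  φ : Zm m ≃ₗ[ℤ] Zm m
  src_comm : ∀ e, G'.src (fE e) = fV (G.src e)
  dst_comm : ∀ e, G'.dst (fE e) = fV (G.dst e)
  rev_comm : ∀ e, fE (G.rev e) = G'.rev (fE e)
  lab : ∀ e, α' (fE e) = φ (α e)

/-- Equivalence of fiberwise signed fibrations over the same base (identity on `ℤ^m`). -/
structure FSFEquiv {m : ℕ} {G B G' : OrGraph}
    (αΓ : G.E → ZmPM m) (π : GraphFib G B) (ft : G.E → Zm m)
    (αΓ' : G'.E → ZmPM m) (π' : GraphFib G' B) (ft' : G'.E → Zm m) : Type where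
  fV : G.V ≃ G'.V
  fE : G.E ≃ G'.E
  src_comm : ∀ e, G'.src (fE e) = fV (G.src e)
  dst_comm : ∀ e, G'.dst (fE e) = fV (G.dst e)
  rev_comm : ∀ e, fE (G.rev e) = G'.rev (fE e)
  lab : ∀ e, αΓ' (fE e) = αΓ e
  baseV : ∀ p, π'.onV (fV p) = π.onV p
  baseE : ∀ e, ¬ π.Vertical e → π'.onE (fE e) = π.onE e
  fiblab : ∀ e, π.Vertical e → ft' (fE e) = ft e

/-- Equivalence of signed GKM fibrations over the same base (identity on `ℤ^m`). -/
structure SFEquiv {m : ℕ} {G B G' : OrGraph}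
    (sΓ : G.E → Zm m) (π : GraphFib G B)
    (sΓ' : G'.E → Zm m) (π' : GraphFib G' B) : Type where
  fV : G.V ≃ G'.V
  fE : G.E ≃ G'.E
  src_comm : ∀ e, G'.src (fE e) = fV (G.src e)
  dst_comm : ∀ e, G'.dst (fE e) = fV (G.dst e)
  rev_comm : ∀ e, fE (G.rev e) = G'.rev (fE e)
  lab : ∀ e, sΓ' (fE e) = sΓ e
  baseV : ∀ p, π'.onV (fV p) = π.onV p
  baseE : ∀ e, ¬ π.Vertical e → π'.onE (fE e) = π.onE e

/-- Realizing `ℤ²` inside `ℝ² = ℂ`. -/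
noncomputable def toC (a : Zm 2) : ℂ := (a 0 : ℝ) + (a 1 : ℝ) * Complex.I

def cross (a b : ℂ) : ℝ := a.re * b.im - a.im * b.re

/-- A vertex of a signed GKM graph with labels in `ℤ²` is interior if the cone
spanned by the labels of the edges emanating from it is all of `ℝ²`. -/
def InteriorVtx (G : OrGraph) (α : G.E → Zm 2) (p : G.V) : Prop :=
  ∀ x : ℂ, ∃ c : G.E → ℝ, (∀ e, 0 ≤ c e) ∧
    x = ∑ e ∈ Finset.univ.filter (fun e : G.E => G.src e = p), c e • toC (α e)

/-- The angle from `w` to `w'`, represented in `[0, 2π)` if `ε = true`,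
and in `(-2π, 0]` if `ε = false`. -/
noncomputable def angTo (ε : Bool) (w w' : ℂ) : ℝ :=
  if ε then (if (w' / w).arg < 0 then (w' / w).arg + 2 * Real.pi else (w' / w).arg)
  else (if 0 < (w' / w).arg then (w' / w).arg - 2 * Real.pi else (w' / w).arg)

/-- The winding number of a cyclic sequence of vectors w.r.t. the orientation `ε`. -/
noncomputable def winding {nn : ℕ} [NeZero nn] (w : ZMod nn → ℂ) (ε : Bool) : ℝ :=
  (1 / (2 * Real.pi)) * ∑ i : ZMod nn, |angTo ε (w i) (w (i + 1))|

def LocallyConvex {nn : ℕ} (w : ZMod nn → ℂ) : Prop :=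
  (∀ i, angTo true (w i) (w (i + 1)) ∈ Set.Ioo 0 Real.pi) ∨
  (∀ i, angTo false (w i) (w (i + 1)) ∈ Set.Ioo (-Real.pi) 0)

/-- `ε` is the preferred orientation of the locally convex sequence `w`. -/
def Preferred {nn : ℕ} (w : ZMod nn → ℂ) (ε : Bool) : Prop :=
  (ε = true ∧ ∀ i, angTo true (w i) (w (i + 1)) ∈ Set.Ioo 0 Real.pi) ∨
  (ε = false ∧ ∀ i, angTo false (w i) (w (i + 1)) ∈ Set.Ioo (-Real.pi) 0)

/-- `P` lists the vertices of a strictly convex polygon in cyclic order. -/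
def ConvexCyclic {nn : ℕ} (P : ZMod nn → ℂ) : Prop :=
  (∀ i j, j ≠ i → j ≠ i + 1 → 0 < cross (P (i + 1) - P i) (P j - P i)) ∨
  (∀ i j, j ≠ i → j ≠ i + 1 → cross (P (i + 1) - P i) (P j - P i) < 0)

def SubAdj (G : OrGraph) (S : Set G.E) (v w : G.V) : Prop :=
  ∃ e ∈ S, G.src e = v ∧ G.dst e = w

/-- `S` is (the edge set of) a connected `2`-valent signed GKM subgraph of `(G, α)`. -/
def IsSigned2ValentSub (G : OrGraph) (α : G.E → Zm 2) (S : Set G.E) : Prop :=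
  S.Nonempty ∧
  (∀ e ∈ S, G.rev e ∈ S) ∧
  (∀ v : G.V, (∃ e ∈ S, G.src e = v) → Nat.card {e : G.E // e ∈ S ∧ G.src e = v} = 2) ∧
  (∀ v w : G.V, (∃ e ∈ S, G.src e = v) → (∃ e ∈ S, G.src e = w) →
      Relation.ReflTransGen (SubAdj G S) v w) ∧
  ∃ T : G.E → G.E → G.E,
    (∀ e f, e ∈ S → f ∈ S → G.src f = G.src e → T e f ∈ S ∧ G.src (T e f) = G.dst e) ∧
    (∀ e, e ∈ S → T e e = G.rev e) ∧
    (∀ e f, e ∈ S → f ∈ S → G.src f = G.src e → T (G.rev e) (T e f) = f) ∧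
    (∀ e f, e ∈ S → f ∈ S → G.src f = G.src e → ∃ c : ℤ, α (T e f) = α f + c • α e)

/-- A `2`-valent signed GKM subgraph of polytope type: it is a cycle realized by the
boundary edges of a simple convex `2`-polytope, with labels representing the slopes. -/
def IsPolytopeTypeSub (G : OrGraph) (α : G.E → Zm 2) (S : Set G.E) : Prop :=
  IsSigned2ValentSub G α S ∧
  ∃ np : ℕ, 3 ≤ np ∧
    ∃ (cyc : ZMod np → G.E) (P : ZMod np → ℂ) (t : ZMod np → ℝ),
      (∀ i, cyc i ∈ S) ∧
      (∀ ed ∈ S, ∃ i, ed = cyc i ∨ ed = G.rev (cyc i)) ∧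
      (∀ i, G.dst (cyc i) = G.src (cyc (i + 1))) ∧
      ConvexCyclic P ∧
      (∀ i, 0 < t i) ∧
      (∀ i, P (i + 1) - P i = t i • toC (α (cyc i)))

/-- A fibration over an `n`-gon base is of product type if the lifts of a path
once around the base are closed. -/
def ProductType {G B : OrGraph} (π : GraphFib G B) {nn : ℕ} (eB : ZMod nn → B.E) : Prop :=
  ∃ l : ZMod nn → G.E,
    ∀ i, ¬ π.Vertical (l i) ∧ π.onE (l i) = eB i ∧ G.dst (l i) = G.src (l (i + 1))

/-- `ℤ`-indexed `n`-gon data for a `2`-valent base graph. -/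
structure ZGonData (B : OrGraph) (n : ℕ) where
  v : ℤ → B.V
  eB : ℤ → B.E
  v_per : ∀ i, v (i + n) = v i
  e_per : ∀ i, eB (i + n) = eB i
  src_e : ∀ i, B.src (eB i) = v i
  dst_e : ∀ i, B.dst (eB i) = v (i + 1)
  v_inj : ∀ i j : ℤ, 0 ≤ i → i < n → 0 ≤ j → j < n → v i = v j → i = j
  v_surj : ∀ w : B.V, ∃ i : ℤ, v i = w
  e_cover : ∀ ed : B.E, ∃ i : ℤ, ed = eB i ∨ ed = B.rev (eB i)

/-- A choice of sign representatives `γ_i` of the base labels with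
`γ_i ≡ -γ_{i+2} (mod γ_{i+1})` for all `i ∈ ℤ`. -/
structure GammaData {B : OrGraph} {n : ℕ} (αB : B.E → ZmPM 2) (D : ZGonData B n) where
  γ : ℤ → Zm 2
  lift : ∀ i, pm (γ i) = αB (D.eB i)
  cong : ∀ i, ∃ c : ℤ, γ i + γ (i + 2) = c • γ (i + 1)

/-- A fiberwise signed `3`-valent GKM fibration over `(B, αB)`. -/
structure FSFOver (B : OrGraph) (αB : B.E → ZmPM 2) : Type 1 where
  G : OrGraph
  αΓ : G.E → ZmPM 2
  hΓ : IsGKM G 3 αΓ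
  π : GraphFib G B
  ft : G.E → Zm 2
  isfs : IsFiberwiseSigned αΓ αB π ft

def FSFOver.Equiv {B : OrGraph} {αB : B.E → ZmPM 2} (F F' : FSFOver B αB) : Prop :=
  Nonempty (FSFEquiv F.αΓ F.π F.ft F'.αΓ F'.π F'.ft)

/-- A signed `3`-valent GKM fibration over the signed graph `(B, sB)`. -/
structure SFOver (B : OrGraph) (sB : B.E → Zm 2) : Type 1 where
  G : OrGraph
  sΓ : G.E → Zm 2
  hΓ : IsSignedGKM G 3 sΓ
  π : GraphFib G B
  issf : IsSignedGKMFib sΓ sB π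

def SFOver.Equiv {B : OrGraph} {sB : B.E → Zm 2} (F F' : SFOver B sB) : Prop :=
  Nonempty (SFEquiv F.sΓ F.π F'.sΓ F'.π)

/-- The fibration `F` realizes the classification datum `([k], η)` w.r.t. the fixed data. -/
def RealizesFS {B : OrGraph} {αB : B.E → ZmPM 2} {n : ℕ} (D : ZGonData B n)
    (Γd : GammaData αB D) (F : FSFOver B αB) (k : ZMod n → ℤ) (η : Bool) : Prop :=
  (η = false ↔ ProductType F.π (fun i : ZMod n => D.eB i.val)) ∧
  ∃ (gE : ℤ → F.G.E) (αf : ℤ → Zm 2) (kk : ℤ → ℤ),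
    (∀ i, F.π.Vertical (gE i)) ∧
    (∀ i, F.π.onV (F.G.src (gE i)) = D.v i) ∧
    (∀ i, gE (i + n) = gE i ∨ gE (i + n) = F.G.rev (gE i)) ∧
    (∀ i, pm (αf i) = F.αΓ (gE i)) ∧
    (∀ i, ∃ c : ℤ, αf (i + 1) = αf i + c • Γd.γ i) ∧
    (∀ i, αf i = kk i • Γd.γ (i - 1) - kk (i - 1) • Γd.γ i) ∧
    (∀ i, kk i ≠ 0) ∧
    (∀ i : ZMod n, k i = kk i.val)

/-- The signed fibration `F` realizes the classification datum `([k], η)`. -/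
def RealizesS {B : OrGraph} (sB : B.E → Zm 2) {αB : B.E → ZmPM 2} {n : ℕ}
    (D : ZGonData B n) (Γd : GammaData αB D) (F : SFOver B sB)
    (k : ZMod n → ℤ) (η : Bool) : Prop :=
  (η = false ↔ ProductType F.π (fun i : ZMod n => D.eB i.val)) ∧
  ∃ (gE : ℤ → F.G.E) (αf : ℤ → Zm 2) (kk : ℤ → ℤ),
    (∀ i, F.π.Vertical (gE i)) ∧
    (∀ i, F.π.onV (F.G.src (gE i)) = D.v i) ∧
    (∀ i, gE (i + n) = gE i ∨ gE (i + n) = F.G.rev (gE i)) ∧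
    (∀ i, pm (αf i) = pm (F.sΓ (gE i))) ∧
    (∀ i, ∃ c : ℤ, αf (i + 1) = αf i + c • Γd.γ i) ∧
    (∀ i, αf i = kk i • Γd.γ (i - 1) - kk (i - 1) • Γd.γ i) ∧
    (∀ i, kk i ≠ 0) ∧
    (∀ i : ZMod n, k i = kk i.val)

def KRel (n : ℕ) (a b : {k : ZMod n → ℤ // ∀ i, k i ≠ 0}) : Prop :=
  a.1 = b.1 ∨ a.1 = - b.1

/-- `((ℤ∖{0})^n)/±1`. -/
def KClass (n : ℕ) := Quot (KRel n)

/-- The Section 7 setting: a signed GKM fibration of twisted type of a `3`-valent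
signed GKM graph `Γ` over `B`, the boundary of a 2-dimensional Delzant polytope with
`n` vertices, with `Γ` having `n-1` interior vertices; with the basic edges `f i`, `h i`
over `e i` and the fiber edges `g i`. -/
structure Section7 : Type 1 where
  n : ℕ
  hn : 3 ≤ n
  G : OrGraph
  B : OrGraph
  aG : G.E → Zm 2
  aB : B.E → Zm 2
  hG : IsSignedGKM G 3 aG
  hB : IsSignedGKM B 2 aB
  π : GraphFib G B
  hfib : IsSignedGKMFib aG aB π
  v : ZMod n → B.V
  e : ZMod n → B.E
  v_bij : Function.Bijective v
  src_e : ∀ i, B.src (e i) = v i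
  dst_e : ∀ i, B.dst (e i) = v (i + 1)
  e_cover : ∀ ed : B.E, ∃ i, ed = e i ∨ ed = B.rev (e i)
  P : ZMod n → ℂ
  tl : ZMod n → ℝ
  tl_pos : ∀ i, 0 < tl i
  polygon : ConvexCyclic P
  slope : ∀ i, P (i + 1) - P i = tl i • toC (aB (e i))
  delzant : ∀ i, (aB (e (i - 1)) 0) * (aB (e i) 1) - (aB (e (i - 1)) 1) * (aB (e i) 0) = 1 ∨
                 (aB (e (i - 1)) 0) * (aB (e i) 1) - (aB (e (i - 1)) 1) * (aB (e i) 0) = -1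
  f : ZMod n → G.E
  h : ZMod n → G.E
  g : ZMod n → G.E
  f_horiz : ∀ i, ¬ π.Vertical (f i)
  h_horiz : ∀ i, ¬ π.Vertical (h i)
  f_over : ∀ i, π.onE (f i) = e i
  h_over : ∀ i, π.onE (h i) = e i
  f_ne_h : ∀ i, f i ≠ h i
  g_vert : ∀ i, π.Vertical (g i)
  g_src : ∀ i, G.src (g i) = G.src (f i)
  g_dst : ∀ i, G.dst (g i) = G.src (h i)
  chain_f : ∀ i : ZMod n, i + 1 ≠ 0 → G.dst (f i) = G.src (f (i + 1))
  chain_h : ∀ i : ZMod n, i + 1 ≠ 0 → G.dst (h i) = G.src (h (i + 1))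
  twist_f : G.dst (f (-1)) = G.src (h 0)
  twist_h : G.dst (h (-1)) = G.src (f 0)
  k : ZMod n → ℤ
  k_ne : ∀ i, k i ≠ 0
  fiberweight : ∀ i, aG (g i) =
    k i • aB (e (i - 1)) - (if i = 0 then - k (i - 1) else k (i - 1)) • aB (e i)
  interior_count : Nat.card {p : G.V // InteriorVtx G aG p} = n - 1

/-- The type II signed structure: the signs of the labels of every second pair
of basic edges are reversed. -/
noncomputable def Section7.alphaII (S : Section7) : S.G.E → Zm 2 :=
  fun ed =>
    if ∃ i : ZMod S.n, Odd i.val ∧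
        (ed = S.f i ∨ ed = S.h i ∨ ed = S.G.rev (S.f i) ∨ ed = S.G.rev (S.h i))
    then - S.aG ed else S.aG ed


/-!
A signed fibration forgets to a fiberwise signed fibration by taking `±` classes and keeping the
signed labels of the vertical edges. Conversely, the signed structure on `Γ` is forced: a
horizontal edge must carry the label of the base edge below it, and a vertical edge the fiber
lift. The only work is to find a connection on `Γ` compatible with these labels. It moves
vertical edges by the connection of the fiberwise signed fibration (where the fiber lift is
compatible by assumption), and horizontal edges by lifting the transport of their image along
the signed base connection, or leaving the image unchanged along vertical edges.
-/

section Labels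

variable {m : ℕ}

lemma pm_eq_pm_iff {a b : Zm m} : pm a = pm b ↔ a = b ∨ a = -b :=
  Quotient.eq

lemma pm_neg (a : Zm m) : pm (-a) = pm a :=
  pm_eq_pm_iff.2 (Or.inr rfl)

lemma Indep.neg_left {a b : Zm m} (h : Indep a b) : Indep (-a) b := fun c d hcd => by
  simpa using h (-c) d (by simpa using hcd)

lemma Indep.neg_right {a b : Zm m} (h : Indep a b) : Indep a (-b) := fun c d hcd => by
  simpa using h c (-d) (by simpa using hcd)

lemma Indep.of_pm_eq {a b a' b' : Zm m} (ha : pm a' = pm a) (hb : pm b' = pm b)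
    (h : Indep a b) : Indep a' b' := by
  rcases pm_eq_pm_iff.1 ha with rfl | rfl <;> rcases pm_eq_pm_iff.1 hb with rfl | rfl
  exacts [h, h.neg_right, h.neg_left, h.neg_left.neg_right]

end Labels

lemma SignedCompat.toUnsignedCompat {m : ℕ} {G : OrGraph} {s : G.E → Zm m} {C : Connection G}
    (h : SignedCompat G s C) : UnsignedCompat G (fun e => pm (s e)) C := by
  obtain ⟨hindep, hconn, hrev⟩ := h
  refine ⟨fun e f hsrc hne a b ha hb => (hindep e f hsrc hne).of_pm_eq ha hb, fun e f hsrc => ?_,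
    fun e => by simp only [hrev e, pm_neg]⟩
  obtain ⟨c, hc⟩ := hconn e f hsrc
  exact ⟨s f, s e, c, rfl, rfl, congrArg pm hc⟩

lemma IsSignedGKM.toIsGKM {m n : ℕ} {G : OrGraph} {s : G.E → Zm m} (h : IsSignedGKM G n s) :
    IsGKM G n (fun e => pm (s e)) :=
  let ⟨hreg, hconn, C, hC⟩ := h
  ⟨hreg, hconn, C, hC.toUnsignedCompat⟩

lemma OrGraph.dst_rev (G : OrGraph) (e : G.E) : G.dst (G.rev e) = G.src e := by
  rw [← G.src_rev, G.rev_rev]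

namespace GraphFib

variable {G B : OrGraph} (π : GraphFib G B)

lemma vertical_rev_iff (e : G.E) : π.Vertical (G.rev e) ↔ π.Vertical e := by
  simp only [Vertical, G.src_rev, G.dst_rev, eq_comm]

lemma src_onE_of_src_eq {e f : G.E} (hf : ¬ π.Vertical f) (hsrc : G.src f = G.src e) :
    B.src (π.onE f) = π.onV (G.src e) := by
  rw [π.src_onE f hf, hsrc]

section Transport

variable (CB : Connection B)

noncomputable def baseTransport (e : G.E) (b : B.E) : B.E :=
  if π.Vertical e then b else CB.t (π.onE e) b

variable {π} {e : G.E} {b : B.E}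

lemma src_baseTransport (hb : B.src b = π.onV (G.src e)) :
    B.src (π.baseTransport CB e b) = π.onV (G.dst e) := by
  unfold baseTransport
  split_ifs with he
  · exact hb.trans he
  · rw [CB.src_t _ _ (hb.trans (π.src_onE e he).symm), π.dst_onE e he]

lemma baseTransport_rev_baseTransport (hb : B.src b = π.onV (G.src e)) :
    π.baseTransport CB (G.rev e) (π.baseTransport CB e b) = b := by
  unfold baseTransport
  by_cases he : π.Vertical e
  · rw [if_pos he, if_pos ((π.vertical_rev_iff e).2 he)]
  · rw [if_neg he, if_neg (mt (π.vertical_rev_iff e).1 he), π.rev_onE e he]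
    exact CB.t_inv _ _ (hb.trans (π.src_onE e he).symm)

end Transport

end GraphFib

namespace GraphFib.IsFib

variable {G B : OrGraph} {π : GraphFib G B} (hπ : π.IsFib)

noncomputable def lift (q : G.V) (b : B.E) (hb : B.src b = π.onV q) : G.E :=
  ((Equiv.ofBijective _ (hπ q)).symm ⟨b, hb⟩).1

variable {q : G.V} {b : B.E} (hb : B.src b = π.onV q)

lemma src_lift : G.src (hπ.lift q b hb) = q :=
  ((Equiv.ofBijective _ (hπ q)).symm ⟨b, hb⟩).2.1

lemma not_vertical_lift : ¬ π.Vertical (hπ.lift q b hb) :=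
  ((Equiv.ofBijective _ (hπ q)).symm ⟨b, hb⟩).2.2

lemma onE_lift : π.onE (hπ.lift q b hb) = b :=
  congrArg Subtype.val ((Equiv.ofBijective _ (hπ q)).apply_symm_apply ⟨b, hb⟩)

lemma eq_lift {e : G.E} (hsrc : G.src e = q) (he : ¬ π.Vertical e) (hbe : π.onE e = b) :
    e = hπ.lift q b hb := by
  have hmap : Equiv.ofBijective _ (hπ q) ⟨e, hsrc, he⟩ = ⟨b, hb⟩ := Subtype.ext hbe
  exact congrArg Subtype.val ((Equiv.ofBijective _ (hπ q)).eq_symm_apply.2 hmap)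

variable (C : Connection G) (CB : Connection B)

noncomputable def adaptedT (e f : G.E) : G.E :=
  if hsrc : G.src f = G.src e then
    if hf : π.Vertical f then C.t e f
    else hπ.lift (G.dst e) (π.baseTransport CB e (π.onE f))
      (src_baseTransport CB (π.src_onE_of_src_eq hf hsrc))
  else f

variable {C CB} {e f : G.E}

lemma adaptedT_of_vertical (hsrc : G.src f = G.src e) (hf : π.Vertical f) :
    hπ.adaptedT C CB e f = C.t e f := by
  rw [adaptedT, dif_pos hsrc, dif_pos hf]

lemma adaptedT_of_not_vertical (hsrc : G.src f = G.src e) (hf : ¬ π.Vertical f) :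
    hπ.adaptedT C CB e f = hπ.lift (G.dst e) (π.baseTransport CB e (π.onE f))
      (src_baseTransport CB (π.src_onE_of_src_eq hf hsrc)) := by
  rw [adaptedT, dif_pos hsrc, dif_neg hf]

lemma not_vertical_adaptedT (hsrc : G.src f = G.src e) (hf : ¬ π.Vertical f) :
    ¬ π.Vertical (hπ.adaptedT C CB e f) := by
  rw [hπ.adaptedT_of_not_vertical hsrc hf]
  exact hπ.not_vertical_lift _

lemma onE_adaptedT (hsrc : G.src f = G.src e) (hf : ¬ π.Vertical f) :
    π.onE (hπ.adaptedT C CB e f) = π.baseTransport CB e (π.onE f) := by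
  rw [hπ.adaptedT_of_not_vertical hsrc hf]
  exact hπ.onE_lift _

lemma src_adaptedT (hsrc : G.src f = G.src e) : G.src (hπ.adaptedT C CB e f) = G.dst e := by
  by_cases hf : π.Vertical f
  · rw [hπ.adaptedT_of_vertical hsrc hf]
    exact C.src_t e f hsrc
  · rw [hπ.adaptedT_of_not_vertical hsrc hf]
    exact hπ.src_lift _

variable (C CB)

lemma adaptedT_self (e : G.E) : hπ.adaptedT C CB e e = G.rev e := by
  by_cases he : π.Vertical e
  · rw [hπ.adaptedT_of_vertical rfl he, C.t_self]
  · rw [hπ.adaptedT_of_not_vertical rfl he]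
    refine (hπ.eq_lift _ (G.src_rev e) (mt (π.vertical_rev_iff e).1 he) ?_).symm
    rw [GraphFib.baseTransport, if_neg he, CB.t_self, π.rev_onE e he]

lemma adaptedT_rev_adaptedT (hsrc : G.src f = G.src e)
    (hC : ∀ e f, G.src f = G.src e → π.Vertical f → π.Vertical (C.t e f)) :
    hπ.adaptedT C CB (G.rev e) (hπ.adaptedT C CB e f) = f := by
  have hsrc' : G.src (hπ.adaptedT C CB e f) = G.src (G.rev e) := by
    rw [G.src_rev, hπ.src_adaptedT hsrc]
  by_cases hf : π.Vertical f
  · rw [hπ.adaptedT_of_vertical hsrc hf] at hsrc' ⊢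
    rw [hπ.adaptedT_of_vertical hsrc' (hC e f hsrc hf), C.t_inv e f hsrc]
  · rw [hπ.adaptedT_of_not_vertical hsrc' (hπ.not_vertical_adaptedT hsrc hf)]
    refine (hπ.eq_lift _ (by rw [G.dst_rev, hsrc]) hf ?_).symm
    rw [hπ.onE_adaptedT hsrc hf,
      baseTransport_rev_baseTransport CB (π.src_onE_of_src_eq hf hsrc)]

noncomputable def adaptedConnection
    (hC : ∀ e f, G.src f = G.src e → π.Vertical f → π.Vertical (C.t e f)) :
    Connection G where
  t := hπ.adaptedT C CB
  src_t _ _ hsrc := hπ.src_adaptedT hsrc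
  t_self := hπ.adaptedT_self C CB
  t_inv _ _ hsrc := hπ.adaptedT_rev_adaptedT C CB hsrc hC

end GraphFib.IsFib

lemma SignedGKMFibCompat.toGKMFibCompat {m : ℕ} {G B : OrGraph} {sG : G.E → Zm m}
    {sB : B.E → Zm m} {π : GraphFib G B} {C : Connection G} {CB : Connection B}
    (h : SignedGKMFibCompat sG sB π C CB) :
    GKMFibCompat (fun e => pm (sG e)) (fun e => pm (sB e)) π C CB :=
  ⟨fun e he => congrArg pm (h.1 e he), h.2⟩

lemma IsSignedGKMFib.isFiberwiseSigned {m : ℕ} {G B : OrGraph} {sG : G.E → Zm m}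
    {sB : B.E → Zm m} {π : GraphFib G B} (h : IsSignedGKMFib sG sB π) :
    IsFiberwiseSigned (fun e => pm (sG e)) (fun e => pm (sB e)) π sG := by
  obtain ⟨hπ, C, CB, hCG, hCB, hcompat⟩ := h
  refine ⟨hπ, fun _ _ => rfl, fun e _ => hCG.2.2 e, C, CB, hCG.toUnsignedCompat,
    hCB.toUnsignedCompat, hcompat.toGKMFibCompat, fun e f hsrc _ => ?_⟩
  obtain ⟨c, hc⟩ := hCG.2.1 e f hsrc
  exact ⟨sG e, c, rfl, hc⟩

lemma exists_eq_add_smul_of_pm_eq {m : ℕ} {x y g a : Zm m} {c : ℤ} (hg : pm g = pm a)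
    (h : y = x + c • g) : ∃ c' : ℤ, y = x + c' • a := by
  rcases pm_eq_pm_iff.1 hg with rfl | rfl
  exacts [⟨c, h⟩, ⟨-c, by rw [h, smul_neg, neg_smul]⟩]

namespace GraphFib

variable {m : ℕ} {G B : OrGraph} (π : GraphFib G B) (ft : G.E → Zm m) (sB : B.E → Zm m)

noncomputable def signedExtension (e : G.E) : Zm m :=
  if π.Vertical e then ft e else sB (π.onE e)

variable {π ft sB}

lemma signedExtension_of_vertical {e : G.E} (he : π.Vertical e) :
    π.signedExtension ft sB e = ft e :=
  if_pos he

lemma signedExtension_of_not_vertical {e : G.E} (he : ¬ π.Vertical e) :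
    π.signedExtension ft sB e = sB (π.onE e) :=
  if_neg he

lemma signedExtension_rev (hft : ∀ e, π.Vertical e → ft (G.rev e) = - ft e)
    (hsB : ∀ b, sB (B.rev b) = - sB b) (e : G.E) :
    π.signedExtension ft sB (G.rev e) = - π.signedExtension ft sB e := by
  by_cases he : π.Vertical e
  · rw [signedExtension_of_vertical ((π.vertical_rev_iff e).2 he),
      signedExtension_of_vertical he, hft e he]
  · rw [signedExtension_of_not_vertical (mt (π.vertical_rev_iff e).1 he),
      signedExtension_of_not_vertical he, π.rev_onE e he, hsB]

lemma exists_baseTransport_eq_add_smul {CB : Connection B} (hCB : SignedCompat B sB CB)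
    {e : G.E} {b : B.E} (hb : B.src b = π.onV (G.src e)) :
    ∃ c : ℤ, sB (π.baseTransport CB e b) = sB b + c • π.signedExtension ft sB e := by
  by_cases he : π.Vertical e
  · exact ⟨0, by rw [baseTransport, if_pos he, zero_smul, add_zero]⟩
  · rw [baseTransport, if_neg he, signedExtension_of_not_vertical he]
    exact hCB.2.1 _ _ (hb.trans (π.src_onE e he).symm)

end GraphFib

namespace IsFiberwiseSigned

variable {m : ℕ} {G B : OrGraph} {aG : G.E → ZmPM m} {aB : B.E → ZmPM m} {π : GraphFib G B}
  {ft : G.E → Zm m} {sB : B.E → Zm m}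

lemma pm_signedExtension (h : IsFiberwiseSigned aG aB π ft) (hsB : ∀ b, pm (sB b) = aB b)
    (e : G.E) : pm (π.signedExtension ft sB e) = aG e := by
  obtain ⟨-, hftpm, -, -, -, -, -, ⟨hlab, -⟩, -⟩ := h
  by_cases he : π.Vertical e
  · rw [GraphFib.signedExtension_of_vertical he, hftpm e he]
  · rw [GraphFib.signedExtension_of_not_vertical he, hsB, hlab e he]

lemma isSignedGKMFib_signedExtension (h : IsFiberwiseSigned aG aB π ft)
    (hsB : ∀ b, pm (sB b) = aB b) {CB : Connection B} (hCB : SignedCompat B sB CB) :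
    IsSignedGKMFib (π.signedExtension ft sB) sB π := by
  have hpm := h.pm_signedExtension hsB
  obtain ⟨hπ, -, hftrev, C, -, hUG, -, ⟨-, hvert, -⟩, hcong⟩ := h
  have hconn : ∀ e f, G.src f = G.src e → ∃ c : ℤ,
      π.signedExtension ft sB (hπ.adaptedT C CB e f) =
        π.signedExtension ft sB f + c • π.signedExtension ft sB e := by
    intro e f hsrc
    by_cases hf : π.Vertical f
    · obtain ⟨g, c, hg, hc⟩ := hcong e f hsrc hf
      rw [hπ.adaptedT_of_vertical hsrc hf,
        GraphFib.signedExtension_of_vertical (hvert e f hsrc hf),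
        GraphFib.signedExtension_of_vertical hf]
      exact exists_eq_add_smul_of_pm_eq (hg.trans (hpm e).symm) hc
    · rw [GraphFib.signedExtension_of_not_vertical (hπ.not_vertical_adaptedT hsrc hf),
        hπ.onE_adaptedT hsrc hf, GraphFib.signedExtension_of_not_vertical hf]
      exact GraphFib.exists_baseTransport_eq_add_smul hCB (π.src_onE_of_src_eq hf hsrc)
  refine ⟨hπ, hπ.adaptedConnection C CB hvert, CB,
    ⟨fun e f hsrc hne => hUG.1 e f hsrc hne _ _ (hpm e) (hpm f), hconn,
      GraphFib.signedExtension_rev hftrev hCB.2.2⟩,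
    hCB, fun e he => GraphFib.signedExtension_of_not_vertical he, ?_, ?_⟩
  · intro e f hsrc hf
    show π.Vertical (hπ.adaptedT C CB e f)
    rw [hπ.adaptedT_of_vertical hsrc hf]
    exact hvert e f hsrc hf
  · intro e f hsrc he hf
    show ¬ π.Vertical (hπ.adaptedT C CB e f) ∧ π.onE (hπ.adaptedT C CB e f) = _
    rw [hπ.onE_adaptedT hsrc hf, GraphFib.baseTransport, if_neg he]
    exact ⟨hπ.not_vertical_adaptedT hsrc hf, rfl⟩

end IsFiberwiseSigned

lemma IsSignedGKMFib.eq_signedExtension {m : ℕ} {G B : OrGraph} {sG : G.E → Zm m}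
    {sB : B.E → Zm m} {π : GraphFib G B} {ft : G.E → Zm m} (h : IsSignedGKMFib sG sB π)
    (hv : ∀ e, π.Vertical e → sG e = ft e) : sG = π.signedExtension ft sB := by
  obtain ⟨-, -, -, -, -, hlab, -⟩ := h
  funext e
  by_cases he : π.Vertical e
  · rw [hv e he, GraphFib.signedExtension_of_vertical he]
  · rw [hlab e he, GraphFib.signedExtension_of_not_vertical he]

/-- a signed fibration of signed GKM graphs gives rise to a fiberwise
signed fibration of the underlying unsigned GKM graphs; conversely, a fiberwise
signed fibration together with a compatible signed structure on the base determines
a unique signed structure on the total graph extending the fiber lift and making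
the fibration a signed fibration. -/
theorem statement0 (m : ℕ) :
    (∀ (G B : OrGraph) (nG nB : ℕ) (sG : G.E → Zm m) (sB : B.E → Zm m)
        (π : GraphFib G B),
        IsSignedGKM G nG sG → IsSignedGKM B nB sB →
        IsSignedGKMFib sG sB π →
        IsGKM G nG (fun e => pm (sG e)) ∧ IsGKM B nB (fun e => pm (sB e)) ∧
          IsFiberwiseSigned (fun e => pm (sG e)) (fun e => pm (sB e)) π sG) ∧
    (∀ (G B : OrGraph) (nG nB : ℕ) (aG : G.E → ZmPM m) (aB : B.E → ZmPM m)
        (π : GraphFib G B) (ft : G.E → Zm m),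
        IsGKM G nG aG → IsGKM B nB aB →
        IsFiberwiseSigned aG aB π ft →
        ∀ sB : B.E → Zm m, (∀ e, pm (sB e) = aB e) →
          (∃ CB : Connection B, SignedCompat B sB CB) →
          ∃! sG : G.E → Zm m,
            (∀ e, π.Vertical e → sG e = ft e) ∧ (∀ e, pm (sG e) = aG e) ∧
              IsSignedGKMFib sG sB π) := by
  refine ⟨fun G B nG nB sG sB π hG hB hfib =>
    ⟨hG.toIsGKM, hB.toIsGKM, hfib.isFiberwiseSigned⟩, ?_⟩
  rintro G B nG nB aG aB π ft - - hfs sB hsB ⟨CB, hCB⟩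
  refine ⟨π.signedExtension ft sB, ⟨fun e he => GraphFib.signedExtension_of_vertical he,
    hfs.pm_signedExtension hsB, hfs.isSignedGKMFib_signedExtension hsB hCB⟩, ?_⟩
  rintro sG ⟨hv, -, hsG⟩
  exact hsG.eq_signedExtension hv

end GKMPaper
end

section
/- In the dimension-6 setting, let (π, α̃) be a fiberwise signed fibration and choose orientations of the fiber edges over the vertices v_i compatibly with a connection, so that the fiber weights α_i ∈ ℤ² satisfy α_i ≡ α_{i+1} mod γ_i for all i ∈ ℤ. Writing α_i = k_i γ_{i−1} + l_i γ_i with the unique integers k_i, l_i in the basis (γ_{i−1}, γ_i) of ℤ², one has l_i = −k_{i−1} for all i, i.e. α_i = k_i γ_{i−1} − k_{i−1} γ_i; moreover all the integers k_i are nonzero. -/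
open Classical

namespace GKMPaper

/-!
The fiber weight `α_i` and the label `γ_i` of the horizontal edge at the same vertex are
independent (GKM condition), so `k_i ≠ 0`. For the relation `l_i = -k_{i-1}`, expand
`α_i - α_{i-1} ≡ 0 mod γ_{i-1}` in the basis `(γ_{i-1}, γ_i)` (effectiveness at `v_i`),
rewriting `γ_{i-2} = c γ_{i-1} - γ_i` by the sign convention on the `γ`'s: the coefficient
of `γ_i` is `l_i + k_{i-1}`.
-/

theorem _root_.Function.Periodic.apply_emod {X : Type*} {f : ℤ → X} {N : ℤ} (h : Function.Periodic f N)
    (i : ℤ) : f (i % N) = f i := by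
  have := h.int_mul (i / N) (i % N)
  rwa [Int.cast_id, Int.emod_add_ediv_mul, eq_comm] at this

theorem indep_of_span_pair_eq_top {x y : Zm 2} (h : Submodule.span ℤ {x, y} = ⊤) : Indep x y :=
  LinearIndependent.pair_iff.mp <| linearIndependent_of_top_le_span_of_card_eq_finrank
    (by rw [Matrix.range_cons_cons_empty, h]) (by simp)

theorem Indep.coeff_ne_zero {m : ℕ} {x y : Zm m} {k l : ℤ} (h : Indep (k • x + l • y) y) :
    k ≠ 0 := by
  rintro rfl
  exact one_ne_zero (h 1 (-l) (by simp)).1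

theorem Indep.coeff_eq_neg_of_congr {m : ℕ} {x y z a b : Zm m} {k l k' l' c c' : ℤ}
    (hyz : Indep y z) (hxz : x + z = c' • y) (ha : a = k • x + l • y) (hb : b = k' • y + l' • z)
    (hab : b = a + c • y) : l' = -k := by
  have key : (k' - (k * c' + l + c)) • y + (l' + k) • z = 0 := by
    linear_combination (norm := module) hab - hb + ha + k • hxz
  linarith [(hyz _ _ key).2]

theorem mem_of_pm_eq {m : ℕ} {S : Submodule ℤ (Zm m)} {a b : Zm m} (h : pm a = pm b)
    (hb : b ∈ S) : a ∈ S := by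
  rcases Quotient.exact h with rfl | rfl
  exacts [hb, S.neg_mem hb]

theorem indep_of_vertical_of_src_eq {m : ℕ} {G B : OrGraph} {aG : G.E → ZmPM m}
    {aB : B.E → ZmPM m} {π : GraphFib G B} {C : Connection G} {CB : Connection B}
    (hfib : π.IsFib) (hC : UnsignedCompat G aG C) (hπ : GKMFibCompat aG aB π C CB)
    {g : G.E} (hg : π.Vertical g) {b : B.E} (hb : B.src b = π.onV (G.src g)) {a c : Zm m}
    (ha : pm a = aG g) (hc : pm c = aB b) : Indep a c := by
  obtain ⟨⟨h, hsrc, hhor⟩, hh⟩ := (hfib (G.src g)).2 ⟨b, hb⟩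
  have hhb : π.onE h = b := congrArg Subtype.val hh
  have hlab : pm c = aG h := by rw [hc, hπ.1 h hhor, hhb]
  exact hC.1 g h hsrc (fun hgh => hhor (hgh ▸ hg)) a c ha hlab

namespace ZGonData

variable {B : OrGraph} {n : ℕ} (D : ZGonData B n)

theorem modEq_of_v_eq (hn : 0 < n) {i j : ℤ} (h : D.v i = D.v j) : i ≡ j [ZMOD n] := by
  have hv := Function.Periodic.apply_emod D.v_per
  exact D.v_inj _ _ (Int.emod_nonneg i (by omega)) (Int.emod_lt_of_pos i (by omega))
    (Int.emod_nonneg j (by omega)) (Int.emod_lt_of_pos j (by omega)) (by rw [hv, hv, h])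

theorem eB_eq_of_modEq {i j : ℤ} (h : i ≡ j [ZMOD n]) : D.eB i = D.eB j := by
  have he := Function.Periodic.apply_emod D.e_per
  rw [← he i, ← he j, h.eq]

theorem eq_or_eq_rev_of_src_eq (hn : 0 < n) {f : B.E} {i : ℤ} (h : B.src f = D.v (i + 1)) :
    f = D.eB (i + 1) ∨ f = B.rev (D.eB i) := by
  obtain ⟨j, rfl | rfl⟩ := D.e_cover f
  · exact .inl (D.eB_eq_of_modEq (D.modEq_of_v_eq hn ((D.src_e j).symm.trans h)))
  · rw [B.src_rev, D.dst_e] at h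
    exact .inr (congrArg B.rev (D.eB_eq_of_modEq ((D.modEq_of_v_eq hn h).add_right_cancel' 1)))

end ZGonData

theorem GammaData.span_pair_eq_top {B : OrGraph} {n : ℕ} {aB : B.E → ZmPM 2} {D : ZGonData B n}
    (Γd : GammaData aB D) (hn : 0 < n) (hrev : ∀ e, aB (B.rev e) = aB e)
    (heff : Effective B aB) (i : ℤ) : Submodule.span ℤ {Γd.γ i, Γd.γ (i + 1)} = ⊤ := by
  obtain ⟨lift, hlift, hspan⟩ := heff (D.v (i + 1))
  rw [eq_top_iff, ← hspan, Submodule.span_le]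
  rintro _ ⟨⟨f, hf⟩, rfl⟩
  have hlab : pm (lift ⟨f, hf⟩) = pm (Γd.γ (i + 1)) ∨ pm (lift ⟨f, hf⟩) = pm (Γd.γ i) := by
    rw [hlift, Γd.lift, Γd.lift]
    rcases D.eq_or_eq_rev_of_src_eq hn hf with rfl | rfl
    exacts [.inl rfl, .inr (hrev _)]
  rcases hlab with h | h <;> exact mem_of_pm_eq h (Submodule.subset_span (by simp))

theorem statement2_general (n : ℕ) (hn : 1 ≤ n)
    (B : OrGraph) (aB : B.E → ZmPM 2) (hBeff : Effective B aB)
    (G : OrGraph) (aG : G.E → ZmPM 2)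
    (π : GraphFib G B) (ft : G.E → Zm 2)
    (hfs : IsFiberwiseSigned aG aB π ft)
    (D : ZGonData B n) (Γd : GammaData aB D)
    (gE : ℤ → G.E) (αf : ℤ → Zm 2)
    (hgv : ∀ i, π.Vertical (gE i))
    (hgo : ∀ i, π.onV (G.src (gE i)) = D.v i)
    (hαf : ∀ i, pm (αf i) = aG (gE i))
    (hchain : ∀ i, ∃ c : ℤ, αf (i + 1) = αf i + c • Γd.γ i)
    (k l : ℤ → ℤ) (hkl : ∀ i, αf i = k i • Γd.γ (i - 1) + l i • Γd.γ i) :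
    (∀ i, l i = - k (i - 1)) ∧ (∀ i, k i ≠ 0) := by
  obtain ⟨hfib, -, -, C, CB, hCG, hCB, hπ, -⟩ := hfs
  refine ⟨fun i => ?_, fun i => ?_⟩
  · obtain ⟨j, rfl⟩ : ∃ j, i = j + 1 := ⟨i - 1, by ring⟩
    obtain ⟨c, hc⟩ := hchain j
    obtain ⟨c', hc'⟩ := Γd.cong (j - 1)
    rw [show j - 1 + 2 = j + 1 by ring, sub_add_cancel] at hc'
    have hk := hkl (j + 1)
    rw [add_sub_cancel_right] at hk ⊢
    exact (indep_of_span_pair_eq_top (Γd.span_pair_eq_top hn hCB.2.2 hBeff j)).coeff_eq_neg_of_congr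
      hc' (hkl j) hk hc
  · have hb : B.src (D.eB i) = π.onV (G.src (gE i)) := by rw [hgo, D.src_e]
    have hind := indep_of_vertical_of_src_eq hfib hCG hπ (hgv i) hb (hαf i) (Γd.lift i)
    rw [hkl i] at hind
    exact hind.coeff_ne_zero

/-- in the dimension-6 setting, with fiber orientations chosen
compatibly with a connection so that `α_i ≡ α_{i+1} mod γ_i`, expanding
`α_i = k_i γ_{i-1} + l_i γ_i` in the basis `(γ_{i-1}, γ_i)` one has `l_i = -k_{i-1}`
for all `i`, and all `k_i` are nonzero. -/
theorem statement2 (n : ℕ) (hn : 1 ≤ n)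
    (B : OrGraph) (aB : B.E → ZmPM 2) (hB : IsGKM B 2 aB) (hBeff : Effective B aB)
    (G : OrGraph) (aG : G.E → ZmPM 2) (hG : IsGKM G 3 aG)
    (π : GraphFib G B) (ft : G.E → Zm 2)
    (hfs : IsFiberwiseSigned aG aB π ft)
    (D : ZGonData B n) (Γd : GammaData aB D)
    (gE : ℤ → G.E) (αf : ℤ → Zm 2)
    (hgv : ∀ i, π.Vertical (gE i))
    (hgo : ∀ i, π.onV (G.src (gE i)) = D.v i)
    (hgper : ∀ i, gE (i + n) = gE i ∨ gE (i + n) = G.rev (gE i))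
    (hαf : ∀ i, pm (αf i) = aG (gE i))
    (hchain : ∀ i, ∃ c : ℤ, αf (i + 1) = αf i + c • Γd.γ i)
    (k l : ℤ → ℤ) (hkl : ∀ i, αf i = k i • Γd.γ (i - 1) + l i • Γd.γ i) :
    (∀ i, l i = - k (i - 1)) ∧ (∀ i, k i ≠ 0) :=
  statement2_general n hn B aB hBeff G aG π ft hfs D Γd gE αf hgv hgo hαf hchain k l hkl

end GKMPaper
end

section
/- In the Section 7 setting, if two fibers of the signed fibration Γ → B are connected by a basic edge and both contain an interior vertex of Γ, then the two interior vertices are connected by a basic edge. -/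
open Classical

namespace GKMPaper

lemma GraphFib.vertical_rev {G B : OrGraph} (π : GraphFib G B) (e : G.E) :
    π.Vertical (G.rev e) ↔ π.Vertical e := by
  rw [GraphFib.Vertical, GraphFib.Vertical, G.src_rev, G.dst_rev, eq_comm]

lemma OrGraph.Regular.eq_or_eq_or_eq {G : OrGraph} (hG : G.Regular 3) {p : G.V}
    {e₁ e₂ e₃ : G.E} (h₁ : G.src e₁ = p) (h₂ : G.src e₂ = p) (h₃ : G.src e₃ = p)
    (h₁₂ : e₁ ≠ e₂) (h₁₃ : e₁ ≠ e₃) (h₂₃ : e₂ ≠ e₃) (e : G.E) (he : G.src e = p) :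
    e = e₁ ∨ e = e₂ ∨ e = e₃ := by
  have hcard : ({⟨e₁, h₁⟩, ⟨e₂, h₂⟩, ⟨e₃, h₃⟩} : Finset {e : G.E // G.src e = p}).card =
      Fintype.card {e : G.E // G.src e = p} := by
    rw [hG p, Finset.card_insert_of_notMem (by simp [h₁₂, h₁₃]),
      Finset.card_insert_of_notMem (by simp [h₂₃]), Finset.card_singleton]
  have hmem := Finset.mem_univ (⟨e, he⟩ : {e // G.src e = p})
  rw [← Finset.eq_univ_of_card _ hcard] at hmem
  simpa using hmem

def det2 (a b : Zm 2) : ℤ := a 0 * b 1 - a 1 * b 0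

lemma toC_re (a : Zm 2) : (toC a).re = a 0 := by simp [toC]

lemma toC_im (a : Zm 2) : (toC a).im = a 1 := by simp [toC]

lemma InteriorVtx.exists_neg {G : OrGraph} {α : G.E → Zm 2} {p : G.V}
    (hint : InteriorVtx G α p) (a b : ℤ) (hab : a ≠ 0 ∨ b ≠ 0) :
    ∃ e, G.src e = p ∧ a * α e 0 + b * α e 1 < 0 := by
  by_contra! hnonneg
  obtain ⟨c, hc, hx⟩ := hint (toC ![-a, -b])
  have hre := congrArg Complex.re hx
  have him := congrArg Complex.im hx
  simp only [Complex.re_sum, Complex.im_sum, Complex.smul_re, Complex.smul_im, toC_re, toC_im,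
    smul_eq_mul] at hre him
  have hsum : -((a : ℝ) ^ 2 + (b : ℝ) ^ 2) =
      ∑ e ∈ Finset.univ.filter (fun e : G.E => G.src e = p),
        c e * ((a * α e 0 + b * α e 1 : ℤ) : ℝ) := by
    have hab' : -((a : ℝ) ^ 2 + (b : ℝ) ^ 2) =
        a * ((![-a, -b] : Zm 2) 0 : ℝ) + b * ((![-a, -b] : Zm 2) 1 : ℝ) := by
      simp only [Matrix.cons_val_zero, Matrix.cons_val_one, Matrix.cons_val_fin_one, Int.cast_neg]
      ring
    rw [hab', hre, him, Finset.mul_sum, Finset.mul_sum, ← Finset.sum_add_distrib]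
    refine Finset.sum_congr rfl fun e _ => ?_
    push_cast; ring
  have hpos : 0 < (a : ℝ) ^ 2 + (b : ℝ) ^ 2 := by
    rcases hab with h | h <;> positivity
  have hge : 0 ≤ ∑ e ∈ Finset.univ.filter (fun e : G.E => G.src e = p),
      c e * ((a * α e 0 + b * α e 1 : ℤ) : ℝ) :=
    Finset.sum_nonneg fun e he =>
      mul_nonneg (hc e) (by exact_mod_cast hnonneg e (Finset.mem_filter.mp he).2)
  linarith

lemma InteriorVtx.coeff_neg {G : OrGraph} {α : G.E → Zm 2} {p : G.V}
    (hint : InteriorVtx G α p) {e₁ e₂ e₃ : G.E}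
    (hall : ∀ e, G.src e = p → e = e₁ ∨ e = e₂ ∨ e = e₃) {s t : ℤ}
    (h₃ : α e₃ = s • α e₁ + t • α e₂) (hD : det2 (α e₁) (α e₂) ≠ 0) : s < 0 := by
  by_contra! hs
  generalize hDdef : det2 (α e₁) (α e₂) = D at hD
  -- the form `D * det2 · (α e₂)` vanishes on `α e₂` and is `D ^ 2 > 0` on `α e₁`
  have hform : ∀ w : Zm 2, D * α e₂ 1 * w 0 + -(D * α e₂ 0) * w 1 = D * det2 w (α e₂) := by
    intro w; unfold det2; ring
  obtain ⟨e, he, hneg⟩ := hint.exists_neg (D * α e₂ 1) (-(D * α e₂ 0)) <| by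
    by_contra! h
    have h₁ := hform (α e₁)
    rw [h.1, h.2, hDdef] at h₁
    exact hD (mul_self_eq_zero.mp (by linarith))
  rw [hform] at hneg
  have hD2 : 0 < D * D := mul_self_pos.mpr hD
  rcases hall e he with rfl | rfl | rfl
  · rw [hDdef] at hneg; linarith
  · rw [det2, mul_comm (α e 0), sub_self, mul_zero] at hneg
    exact hneg.false
  · have h₃' : det2 (α e) (α e₂) = s * D := by
      rw [h₃, ← hDdef]
      simp only [det2, Pi.add_apply, Pi.smul_apply, smul_eq_mul]
      ring
    rw [h₃'] at hneg
    nlinarith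

lemma InteriorVtx.coeffs_neg {G : OrGraph} {α : G.E → Zm 2} {p : G.V}
    (hint : InteriorVtx G α p) {e₁ e₂ e₃ : G.E}
    (hall : ∀ e, G.src e = p → e = e₁ ∨ e = e₂ ∨ e = e₃) {s t : ℤ}
    (h₃ : α e₃ = s • α e₁ + t • α e₂) (hD : det2 (α e₁) (α e₂) ≠ 0) : s < 0 ∧ t < 0 := by
  refine ⟨hint.coeff_neg hall h₃ hD,
    hint.coeff_neg (e₁ := e₂) (e₂ := e₁) (e₃ := e₃) (t := s) ?_ ?_ ?_⟩
  · intro e he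
    rcases hall e he with h | h | h <;> simp [h]
  · rw [h₃, add_comm]
  · intro h
    apply hD
    unfold det2 at h ⊢
    linarith

namespace Section7

variable (S : Section7) (i : ZMod S.n) (b : Bool)

lemma aG_rev (x : S.G.E) : S.aG (S.G.rev x) = -S.aG x := by
  obtain ⟨-, -, C, hC⟩ := S.hG
  exact hC.2.2 x

lemma aG_eq_aB_onE (x : S.G.E) (hx : ¬ S.π.Vertical x) : S.aG x = S.aB (S.π.onE x) := by
  obtain ⟨-, C, CB, -, -, hc⟩ := S.hfib
  exact hc.1 x hx

def basicEdge : S.G.E := cond b (S.f i) (S.h i)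

def fiberEdge : S.G.E := cond b (S.g i) (S.G.rev (S.g i))

def sheetSign : ℤ := cond b 1 (-1)

/-- The sheet reached by `basicEdge i b`: the lifts of the loop around `B` swap the sheets at the
passage from `e (-1)` to `e 0`. -/
def nextSheet : Bool := xor b (decide (i + 1 = 0))

/-- The coefficient `k (i - 1)` in the label of `g i`, with the sign of the twist at `i = 0`. -/
def kPrev : ℤ := if i = 0 then -S.k (i - 1) else S.k (i - 1)

lemma sheetSign_not : sheetSign (!b) = -sheetSign b := by
  cases b <;> rfl

lemma basicEdge_not_vertical : ¬ S.π.Vertical (S.basicEdge i b) := by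
  cases b
  exacts [S.h_horiz i, S.f_horiz i]

lemma onE_basicEdge : S.π.onE (S.basicEdge i b) = S.e i := by
  cases b
  exacts [S.h_over i, S.f_over i]

lemma aG_basicEdge : S.aG (S.basicEdge i b) = S.aB (S.e i) := by
  rw [S.aG_eq_aB_onE _ (S.basicEdge_not_vertical i b), S.onE_basicEdge]

lemma onV_src_basicEdge : S.π.onV (S.G.src (S.basicEdge i b)) = S.v i := by
  rw [← S.π.src_onE _ (S.basicEdge_not_vertical i b), S.onE_basicEdge, S.src_e]

lemma fiberEdge_vertical : S.π.Vertical (S.fiberEdge i b) := by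
  cases b
  exacts [(S.π.vertical_rev _).mpr (S.g_vert i), S.g_vert i]

lemma src_fiberEdge : S.G.src (S.fiberEdge i b) = S.G.src (S.basicEdge i b) := by
  cases b
  exacts [(S.G.src_rev _).trans (S.g_dst i), S.g_src i]

lemma dst_fiberEdge : S.G.dst (S.fiberEdge i b) = S.G.src (S.basicEdge i (!b)) := by
  cases b
  exacts [(S.G.dst_rev _).trans (S.g_src i), S.g_dst i]

lemma aG_fiberEdge : S.aG (S.fiberEdge i b) =
    sheetSign b • (S.k i • S.aB (S.e (i - 1)) - S.kPrev i • S.aB (S.e i)) := by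
  cases b
  · rw [fiberEdge, cond_false, aG_rev, S.fiberweight, kPrev, sheetSign, cond_false, neg_one_smul]
  · rw [fiberEdge, cond_true, S.fiberweight, kPrev, sheetSign, cond_true, one_smul]

lemma dst_basicEdge :
    S.G.dst (S.basicEdge i b) = S.G.src (S.basicEdge (i + 1) (S.nextSheet i b)) := by
  by_cases hi : i + 1 = 0
  · obtain rfl : i = -1 := eq_neg_of_add_eq_zero_left hi
    cases b
    · simpa [basicEdge, nextSheet] using S.twist_h
    · simpa [basicEdge, nextSheet] using S.twist_f
  · cases b
    · simpa [basicEdge, nextSheet, hi] using S.chain_h i hi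
    · simpa [basicEdge, nextSheet, hi] using S.chain_f i hi

lemma exists_dst_basicEdge_sub_one :
    ∃ b', S.G.dst (S.basicEdge (i - 1) b') = S.G.src (S.basicEdge i b) :=
  ⟨xor b (decide (i = 0)), by simp [dst_basicEdge, nextSheet]⟩

lemma sheetSign_nextSheet_mul_kPrev :
    sheetSign (S.nextSheet i b) * S.kPrev (i + 1) = sheetSign b * S.k i := by
  by_cases hi : i + 1 = 0
  · obtain rfl : i = -1 := eq_neg_of_add_eq_zero_left hi
    cases b <;> simp [nextSheet, kPrev, sheetSign]
  · cases b <;> simp [nextSheet, kPrev, sheetSign, hi]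

lemma det2_ne_zero : det2 (S.aB (S.e i)) (-S.aB (S.e (i - 1))) ≠ 0 := by
  intro h
  simp only [det2, Pi.neg_apply] at h
  rcases S.delzant i with hd | hd <;> linarith

lemma edges_at_src_basicEdge (b' : Bool)
    (hb' : S.G.dst (S.basicEdge (i - 1) b') = S.G.src (S.basicEdge i b))
    (x : S.G.E) (hx : S.G.src x = S.G.src (S.basicEdge i b)) :
    x = S.basicEdge i b ∨ x = S.G.rev (S.basicEdge (i - 1) b') ∨ x = S.fiberEdge i b := by
  refine S.hG.1.eq_or_eq_or_eq rfl (by rw [S.G.src_rev, hb']) (S.src_fiberEdge i b) ?_ ?_ ?_ x hx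
  · intro h
    apply S.det2_ne_zero i
    rw [← S.aG_basicEdge i b, h, aG_rev, S.aG_basicEdge, det2]
    ring
  · exact fun h => S.basicEdge_not_vertical i b (h ▸ S.fiberEdge_vertical i b)
  · intro h
    have hv := h ▸ S.fiberEdge_vertical i b
    exact S.basicEdge_not_vertical (i - 1) b' ((S.π.vertical_rev _).mp hv)

lemma exists_eq_src_basicEdge (p : S.G.V) : ∃ i b, p = S.G.src (S.basicEdge i b) := by
  induction S.hG.2.1 (S.G.src (S.basicEdge 0 true)) p with
  | refl => exact ⟨0, true, rfl⟩
  | tail _ hstep ih =>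
    obtain ⟨x, rfl, rfl⟩ := hstep
    obtain ⟨i, b, hx⟩ := ih
    obtain ⟨b', hb'⟩ := S.exists_dst_basicEdge_sub_one i b
    rcases S.edges_at_src_basicEdge i b b' hb' x hx with rfl | rfl | rfl
    · exact ⟨i + 1, _, S.dst_basicEdge i b⟩
    · exact ⟨i - 1, b', S.G.dst_rev _⟩
    · exact ⟨i, !b, S.dst_fiberEdge i b⟩

lemma exists_eq_src_basicEdge_of_onV (p : S.G.V) (j : ZMod S.n) (hp : S.π.onV p = S.v j) :
    ∃ b, p = S.G.src (S.basicEdge j b) := by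
  obtain ⟨i, b, rfl⟩ := S.exists_eq_src_basicEdge p
  obtain rfl : i = j := S.v_bij.1 (by rw [← S.onV_src_basicEdge i b, hp])
  exact ⟨b, rfl⟩

lemma pos_of_interior (hint : InteriorVtx S.G S.aG (S.G.src (S.basicEdge i b))) :
    0 < sheetSign b * S.k i ∧ 0 < sheetSign b * S.kPrev i := by
  obtain ⟨b', hb'⟩ := S.exists_dst_basicEdge_sub_one i b
  have hlab : S.aG (S.fiberEdge i b) = (-(sheetSign b * S.kPrev i)) • S.aG (S.basicEdge i b) +
      (-(sheetSign b * S.k i)) • S.aG (S.G.rev (S.basicEdge (i - 1) b')) := by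
    rw [aG_fiberEdge, aG_rev, S.aG_basicEdge, S.aG_basicEdge]
    module
  obtain ⟨hμ, hκ⟩ := hint.coeffs_neg (S.edges_at_src_basicEdge i b b' hb') hlab
    (by rw [aG_rev, S.aG_basicEdge, S.aG_basicEdge]; exact S.det2_ne_zero i)
  exact ⟨by linarith, by linarith⟩

lemma eq_dst_basicEdge_of_interior (q : S.G.V) (hq : S.π.onV q = S.v (i + 1))
    (hpint : InteriorVtx S.G S.aG (S.G.src (S.basicEdge i b)))
    (hqint : InteriorVtx S.G S.aG q) : q = S.G.dst (S.basicEdge i b) := by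
  obtain ⟨b', rfl⟩ := S.exists_eq_src_basicEdge_of_onV q (i + 1) hq
  rw [dst_basicEdge]
  by_cases hb' : b' = S.nextSheet i b
  · rw [hb']
  have hκ := (S.pos_of_interior i b hpint).1
  have hμ := (S.pos_of_interior (i + 1) b' hqint).2
  rw [Bool.eq_not_of_ne hb', sheetSign_not, neg_mul, S.sheetSign_nextSheet_mul_kPrev] at hμ
  linarith

end Section7

/-- in the Section 7 setting, if two fibers are connected by a basic
edge and both contain an interior vertex, then the interior vertices are connected
by a basic edge. -/
theorem statement6 (S : Section7) (ed : S.G.E) (hhor : ¬ S.π.Vertical ed)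
    (p q : S.G.V)
    (hp : S.π.onV p = S.π.onV (S.G.src ed)) (hq : S.π.onV q = S.π.onV (S.G.dst ed))
    (hpint : InteriorVtx S.G S.aG p) (hqint : InteriorVtx S.G S.aG q) :
    ∃ ed' : S.G.E, ¬ S.π.Vertical ed' ∧ S.G.src ed' = p ∧ S.G.dst ed' = q := by
  have hsrc := S.π.src_onE ed hhor
  have hdst := S.π.dst_onE ed hhor
  obtain ⟨j, hj | hj⟩ := S.e_cover (S.π.onE ed)
  · obtain ⟨b, rfl⟩ := S.exists_eq_src_basicEdge_of_onV p j (by rw [hp, ← hsrc, hj, S.src_e])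
    have hq' := S.eq_dst_basicEdge_of_interior j b q (by rw [hq, ← hdst, hj, S.dst_e]) hpint hqint
    exact ⟨S.basicEdge j b, S.basicEdge_not_vertical j b, rfl, hq'.symm⟩
  · obtain ⟨b, rfl⟩ := S.exists_eq_src_basicEdge_of_onV q j
      (by rw [hq, ← hdst, hj, S.B.dst_rev, S.src_e])
    have hp' := S.eq_dst_basicEdge_of_interior j b p
      (by rw [hp, ← hsrc, hj, S.B.src_rev, S.dst_e]) hqint hpint
    refine ⟨S.G.rev (S.basicEdge j b), ?_, by rw [S.G.src_rev, hp'], S.G.dst_rev _⟩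
    rw [S.π.vertical_rev]
    exact S.basicEdge_not_vertical j b

end GKMPaper
end
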